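/- Fix k, r ∈ ℕ and ζ ∈ ℝ with |ζ| < 1. Let E_k^r(ζ) be the set of P²-ADHM data (a₁,a₂,d,b,c) at level ζ which moreover satisfy the non-degeneracy conditions C1' and C2', with the subspace topology. Then the continuous map ι : E_k^r(ζ) → E_k^{r+3k}(ζ) sending (a₁,a₂,d,b,c) to (a₁, a₂, d, (b 0 0 0), (c; 0; 0; 0)) — where b is extended by three k×k zero blocks of columns and c by three k×k zero blocks of rows — is null-homotopic, i.e. homotopic through continuous maps to a constant map. -/

import Mathlib

open Matrix

/-- The configuration space for P²-ADHM data: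
`M_k(ℂ) × M_k(ℂ) × M_k(ℂ) × M_{k×r}(ℂ) × M_{r×k}(ℂ)`. -/
abbrev ConfP2 (k r : ℕ) :=
  Matrix (Fin k) (Fin k) ℂ × Matrix (Fin k) (Fin k) ℂ × Matrix (Fin k) (Fin k) ℂ ×
    Matrix (Fin k) (Fin r) ℂ × Matrix (Fin r) (Fin k) ℂ

/-- A P²-ADHM datum at level `ζ`, as a point `(a₁, a₂, d, b, c)` of `ConfP2 k r`. -/
def IsP2ADHM {k r : ℕ} (ζ : ℝ) (p : ConfP2 k r) : Prop :=
  p.1 * p.2.2.1 * p.2.1 - p.2.1 * p.2.2.1 * p.1 + p.2.2.2.1 * p.2.2.2.2 = 0 ∧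
  p.1 * p.1ᴴ + p.2.1 * p.2.1ᴴ + p.2.2.2.1 * p.2.2.2.1ᴴ = 1 ∧
  p.2.2.1 * p.1 * (p.2.2.1 * p.1)ᴴ - (p.2.2.1 * p.1)ᴴ * (p.2.2.1 * p.1)
      + p.2.2.1 * p.2.1 * (p.2.2.1 * p.2.1)ᴴ - (p.2.2.1 * p.2.1)ᴴ * (p.2.2.1 * p.2.1)
      - p.1ᴴ * p.1 - p.2.1ᴴ * p.2.1
      + p.2.2.1 * p.2.2.2.1 * (p.2.2.1 * p.2.2.2.1)ᴴ - p.2.2.2.2ᴴ * p.2.2.2.2 + 1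
    = (ζ : ℂ) • (1 : Matrix (Fin k) (Fin k) ℂ)

/-- The non-degeneracy conditions C1' and C2' for a P²-ADHM configuration
`(a₁,a₂,d,b,c)`, viewed through the linear maps `a₁, a₂ : W₁ → W₀`,
`d : W₀ → W₁`, `b : ℂʳ → W₀`, `c : W₁ → ℂʳ` with `W₀ = W₁ = ℂᵏ`:
C1' — there are no subspaces `V₀' ⊊ W₀`, `V₁' ⊆ W₁` with `dim V₀' = dim V₁'`,
`range b ⊆ V₀'`, `d(V₀') ⊆ V₁'`, `aᵢ(V₁') ⊆ V₀'`;
C2' — there are no subspaces `V₀ ⊆ W₀`, `0 ≠ V₁ ⊆ W₁` with `dim V₀ = dim V₁`,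
`V₁ ⊆ ker c`, `d(V₀) ⊆ V₁`, `aᵢ(V₁) ⊆ V₀`. -/
def P2NonDeg {k r : ℕ} (p : ConfP2 k r) : Prop :=
  (¬ ∃ (V₀' V₁' : Submodule ℂ (Fin k → ℂ)),
      V₀' ≠ ⊤ ∧
      Module.finrank ℂ V₀' = Module.finrank ℂ V₁' ∧
      LinearMap.range p.2.2.2.1.mulVecLin ≤ V₀' ∧
      V₀'.map p.2.2.1.mulVecLin ≤ V₁' ∧
      V₁'.map p.1.mulVecLin ≤ V₀' ∧
      V₁'.map p.2.1.mulVecLin ≤ V₀') ∧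
  (¬ ∃ (V₀ V₁ : Submodule ℂ (Fin k → ℂ)),
      V₁ ≠ ⊥ ∧
      Module.finrank ℂ V₀ = Module.finrank ℂ V₁ ∧
      V₁ ≤ LinearMap.ker p.2.2.2.2.mulVecLin ∧
      V₀.map p.2.2.1.mulVecLin ≤ V₁ ∧
      V₁.map p.1.mulVecLin ≤ V₀ ∧
      V₁.map p.2.1.mulVecLin ≤ V₀)

/-- Extend a `k × r` matrix by `m` zero columns. -/
def extendCols {k r : ℕ} (m : ℕ) (b : Matrix (Fin k) (Fin r) ℂ) :
    Matrix (Fin k) (Fin (r + m)) ℂ :=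
  Matrix.of fun i j => if h : (j : ℕ) < r then b i ⟨j, h⟩ else 0

/-- Extend an `r × k` matrix by `m` zero rows. -/
def extendRows {k r : ℕ} (m : ℕ) (c : Matrix (Fin r) (Fin k) ℂ) :
    Matrix (Fin (r + m)) (Fin k) ℂ :=
  Matrix.of fun i j => if h : (i : ℕ) < r then c ⟨i, h⟩ j else 0

/-- The rank-stabilization map
`(a₁,a₂,d,b,c) ↦ (a₁, a₂, d, (b 0 ⋯ 0), (c; 0; ⋯; 0))`. -/
def extP2 {k r : ℕ} (m : ℕ) (p : ConfP2 k r) : ConfP2 k (r + m) :=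
  (p.1, p.2.1, p.2.2.1, extendCols m p.2.2.2.1, extendRows m p.2.2.2.2)

/-!
The framing `(b, c)` enters the ADHM equations only through `b c`, `b bᴴ` and `cᴴ c`, and the
non-degeneracy conditions only through `range b` and `ker c`; `extP2` changes none of these.
The `3k` new framing directions leave room for the family
`(f a₁, f a₂, u d, (f b  0  0  g), (f c; g u dᴴ; g √(1-ζ); 0))`:
the rows `g u dᴴ` of `c` cancel the term `g² d dᴴ` that the column `g` of `b` adds to the third
equation, and the rows `g √(1-ζ)` absorb the constant. The family solves the equations at
level `ζ` when `f² + g² = 1` and either `u = 1` or `f = 0`, and for `g ≠ 0` it is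
non-degenerate, since `b` is then onto and (as `ζ < 1`) `c` is injective. Rotating `(f, g)`
from `(1, 0)` to `(0, 1)` with `u = 1`, then shrinking `u` to `0`, contracts the
stabilization map onto the point `(0, 0, 0, (0 0 0 1), (0; 0; √(1-ζ); 0))`.
-/

section MatrixLemmas

variable {X R l m n n₁ n₂ : Type*}

@[fun_prop]
theorem Continuous.matrix_fromCols [TopologicalSpace X] [TopologicalSpace R]
    {A : X → Matrix m n₁ R} {B : X → Matrix m n₂ R} (hA : Continuous A) (hB : Continuous B) :
    Continuous fun x => fromCols (A x) (B x) :=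
  continuous_matrix fun _ j => by
    cases j <;> [exact hA.matrix_elem _ _; exact hB.matrix_elem _ _]

@[fun_prop]
theorem Continuous.matrix_fromRows [TopologicalSpace X] [TopologicalSpace R]
    {A : X → Matrix n₁ n R} {B : X → Matrix n₂ n R} (hA : Continuous A) (hB : Continuous B) :
    Continuous fun x => fromRows (A x) (B x) :=
  continuous_matrix fun i _ => by
    cases i <;> [exact hA.matrix_elem _ _; exact hB.matrix_elem _ _]

variable [CommSemiring R]

theorem Matrix.range_mulVecLin_eq_top_of_mul_eq_one [Fintype m] [Fintype n] [DecidableEq n]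
    {A : Matrix n m R} {B : Matrix m n R} (h : A * B = 1) : LinearMap.range A.mulVecLin = ⊤ :=
  LinearMap.range_eq_top.2 fun v => ⟨B *ᵥ v, by simp [h]⟩

theorem Matrix.ker_mulVecLin_eq_bot_of_mul_eq_one [Fintype m] [Fintype n] [DecidableEq m]
    {A : Matrix n m R} {B : Matrix m n R} (h : B * A = 1) : LinearMap.ker A.mulVecLin = ⊥ :=
  LinearMap.ker_eq_bot_of_inverse (g := B.mulVecLin) (by rw [← mulVecLin_mul, h, mulVecLin_one])

theorem Matrix.range_mul_mulVecLin_of_mul_eq_one [Fintype l] [Fintype m] [DecidableEq l]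
    {A : Matrix n l R} {B : Matrix l m R} {B' : Matrix m l R} (h : B * B' = 1) :
    LinearMap.range (A * B).mulVecLin = LinearMap.range A.mulVecLin := by
  rw [mulVecLin_mul, LinearMap.range_comp, range_mulVecLin_eq_top_of_mul_eq_one h,
    Submodule.map_top]

theorem Matrix.ker_mul_mulVecLin_of_mul_eq_one [Fintype l] [Fintype m] [Fintype n] [DecidableEq m]
    {A : Matrix m n R} {B : Matrix l m R} {B' : Matrix m l R} (h : B' * B = 1) :
    LinearMap.ker (B * A).mulVecLin = LinearMap.ker A.mulVecLin := by
  rw [mulVecLin_mul, LinearMap.ker_comp_of_ker_eq_bot _ (ker_mulVecLin_eq_bot_of_mul_eq_one h)]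

end MatrixLemmas

namespace P2ADHM

section Gram

variable {ι : Type*} [Fintype ι] [DecidableEq ι]

def IsADHMGram (ζ : ℝ) (a₁ a₂ d BC BB CC : Matrix ι ι ℂ) : Prop :=
  a₁ * d * a₂ - a₂ * d * a₁ + BC = 0 ∧
  a₁ * a₁ᴴ + a₂ * a₂ᴴ + BB = 1 ∧
  d * a₁ * (d * a₁)ᴴ - (d * a₁)ᴴ * (d * a₁) + d * a₂ * (d * a₂)ᴴ - (d * a₂)ᴴ * (d * a₂)
      - a₁ᴴ * a₁ - a₂ᴴ * a₂ + d * BB * dᴴ - CC + 1 = ζ • 1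

theorem IsADHMGram.rotate {ζ f g : ℝ} {a₁ a₂ d BC BB CC : Matrix ι ι ℂ}
    (h : IsADHMGram ζ a₁ a₂ d BC BB CC) (hfg : f ^ 2 + g ^ 2 = 1) :
    IsADHMGram ζ (f • a₁) (f • a₂) d (f ^ 2 • BC) (f ^ 2 • BB + g ^ 2 • 1)
      (f ^ 2 • CC + g ^ 2 • (d * dᴴ) + (g ^ 2 * (1 - ζ)) • 1) := by
  obtain ⟨h₁, h₂, h₃⟩ := h
  simp only [IsADHMGram, conjTranspose_smul, star_trivial, smul_mul_assoc, mul_smul_comm,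
    smul_smul, Matrix.mul_add, Matrix.add_mul, Matrix.mul_one]
  refine ⟨?_, ?_, ?_⟩
  · linear_combination (norm := module) f ^ 2 • h₁
  · linear_combination (norm := module) f ^ 2 • h₂ + hfg • (1 : Matrix ι ι ℂ)
  · linear_combination (norm := module) f ^ 2 • h₃ + (ζ - 1) • hfg • (1 : Matrix ι ι ℂ)

theorem isADHMGram_shrink (ζ u : ℝ) (d : Matrix ι ι ℂ) :
    IsADHMGram ζ 0 0 (u • d) 0 1 (u ^ 2 • (d * dᴴ) + (1 - ζ) • 1) := by
  refine ⟨by simp, by simp, ?_⟩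
  simp only [conjTranspose_smul, star_trivial, smul_mul_assoc, mul_smul_comm, smul_smul,
    Matrix.mul_one, Matrix.mul_zero, conjTranspose_zero]
  module

end Gram

variable {k r : ℕ}

theorem isP2ADHM_iff {ζ : ℝ} {p : ConfP2 k r} :
    IsP2ADHM ζ p ↔ IsADHMGram ζ p.1 p.2.1 p.2.2.1 (p.2.2.2.1 * p.2.2.2.2)
      (p.2.2.2.1 * p.2.2.2.1ᴴ) (p.2.2.2.2ᴴ * p.2.2.2.2) := by
  simp only [IsP2ADHM, IsADHMGram, conjTranspose_mul, Matrix.mul_assoc, Complex.coe_smul]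

theorem p2NonDeg_of_mul_eq_one {p : ConfP2 k r} {R : Matrix (Fin r) (Fin k) ℂ}
    {L : Matrix (Fin k) (Fin r) ℂ} (hR : p.2.2.2.1 * R = 1) (hL : L * p.2.2.2.2 = 1) :
    P2NonDeg p := by
  refine ⟨fun ⟨V₀', _, hne, _, hb, _⟩ => hne ?_, fun ⟨_, V₁, hne, _, hc, _⟩ => hne ?_⟩
  · exact top_le_iff.1 (range_mulVecLin_eq_top_of_mul_eq_one hR ▸ hb)
  · exact le_bot_iff.1 (ker_mulVecLin_eq_bot_of_mul_eq_one hL ▸ hc)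

def reframe {r' : ℕ} (V : Matrix (Fin r) (Fin r') ℂ) (p : ConfP2 k r) : ConfP2 k r' :=
  (p.1, p.2.1, p.2.2.1, p.2.2.2.1 * V, Vᴴ * p.2.2.2.2)

section Reframe

variable {r' : ℕ} {V : Matrix (Fin r) (Fin r') ℂ}

theorem isP2ADHM_reframe_iff {ζ : ℝ} (hV : V * Vᴴ = 1) {p : ConfP2 k r} :
    IsP2ADHM ζ (reframe V p) ↔ IsP2ADHM ζ p := by
  have hV' : ∀ X : Matrix (Fin r) (Fin k) ℂ, V * (Vᴴ * X) = X := fun X => by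
    rw [← Matrix.mul_assoc, hV, Matrix.one_mul]
  simp only [isP2ADHM_iff, reframe, conjTranspose_mul, conjTranspose_conjTranspose,
    Matrix.mul_assoc, hV']

theorem p2NonDeg_reframe_iff (hV : V * Vᴴ = 1) {p : ConfP2 k r} :
    P2NonDeg (reframe V p) ↔ P2NonDeg p := by
  simp only [P2NonDeg, reframe, range_mul_mulVecLin_of_mul_eq_one hV,
    ker_mul_mulVecLin_of_mul_eq_one hV]

end Reframe

theorem extendCols_eq_mul (m : ℕ) (b : Matrix (Fin k) (Fin r) ℂ) :
    extendCols m b = b * extendCols m (1 : Matrix (Fin r) (Fin r) ℂ) := by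
  ext i j
  rw [mul_apply]
  by_cases h : (j : ℕ) < r <;> simp [extendCols, h, one_apply]

theorem extendRows_eq_mul (m : ℕ) (c : Matrix (Fin r) (Fin k) ℂ) :
    extendRows m c = (extendCols m (1 : Matrix (Fin r) (Fin r) ℂ))ᴴ * c := by
  ext i j
  rw [mul_apply]
  by_cases h : (i : ℕ) < r <;> simp [extendCols, extendRows, h, one_apply]

theorem extendCols_one_mul_conjTranspose (m : ℕ) :
    extendCols m (1 : Matrix (Fin r) (Fin r) ℂ) *
      (extendCols m (1 : Matrix (Fin r) (Fin r) ℂ))ᴴ = 1 := by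
  ext i j
  simp [extendCols, mul_apply, Fin.sum_univ_add, one_apply, eq_comm]

theorem extP2_eq_reframe (m : ℕ) (p : ConfP2 k r) :
    extP2 m p = reframe (extendCols m 1) p := by
  rw [extP2, reframe, ← extendCols_eq_mul, ← extendRows_eq_mul]

theorem isP2ADHM_extP2 {ζ : ℝ} (m : ℕ) {p : ConfP2 k r} (hp : IsP2ADHM ζ p) :
    IsP2ADHM ζ (extP2 m p) := by
  rwa [extP2_eq_reframe, isP2ADHM_reframe_iff (extendCols_one_mul_conjTranspose m)]

theorem p2NonDeg_extP2 (m : ℕ) {p : ConfP2 k r} (hp : P2NonDeg p) : P2NonDeg (extP2 m p) := by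
  rwa [extP2_eq_reframe, p2NonDeg_reframe_iff (extendCols_one_mul_conjTranspose m)]

/-- How the three new blocks are laid out in `Fin (3 * k)` is irrelevant; on `Fin r` it must be
`Fin.castAdd`, so that `deform ζ p 1 0 1 = extP2 (3 * k) p`. -/
noncomputable def framingEquiv (k r : ℕ) : Fin r ⊕ (Fin k ⊕ Fin k ⊕ Fin k) ≃ Fin (r + 3 * k) :=
  (Equiv.sumCongr (Equiv.refl _) (Fintype.equivFinOfCardEq (by simp; ring))).trans finSumFinEquiv

noncomputable def deform (ζ : ℝ) (p : ConfP2 k r) (f g u : ℝ) : ConfP2 k (r + 3 * k) :=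
  (f • p.1, f • p.2.1, u • p.2.2.1,
    (fromCols (f • p.2.2.2.1) (fromCols 0 (fromCols 0 (g • 1)))).submatrix id
      (framingEquiv k r).symm,
    (fromRows (f • p.2.2.2.2)
      (fromRows ((g * u) • p.2.2.1ᴴ) (fromRows ((g * √(1 - ζ)) • 1) 0))).submatrix
        (framingEquiv k r).symm id)

theorem isP2ADHM_deform_iff {ζ : ℝ} (hζ : ζ ≤ 1) (p : ConfP2 k r) (f g u : ℝ) :
    IsP2ADHM ζ (deform ζ p f g u) ↔
      IsADHMGram ζ (f • p.1) (f • p.2.1) (u • p.2.2.1) (f ^ 2 • (p.2.2.2.1 * p.2.2.2.2))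
        (f ^ 2 • (p.2.2.2.1 * p.2.2.2.1ᴴ) + g ^ 2 • 1)
        (f ^ 2 • (p.2.2.2.2ᴴ * p.2.2.2.2) + (g * u) ^ 2 • (p.2.2.1 * p.2.2.1ᴴ)
          + (g ^ 2 * (1 - ζ)) • 1) := by
  rw [isP2ADHM_iff]
  simp only [deform, conjTranspose_submatrix, submatrix_mul_equiv, submatrix_id_id,
    conjTranspose_fromCols_eq_fromRows_conjTranspose,
    conjTranspose_fromRows_eq_fromCols_conjTranspose, fromCols_mul_fromRows,
    conjTranspose_smul, star_trivial, conjTranspose_zero, conjTranspose_one,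
    conjTranspose_conjTranspose, Matrix.smul_mul, Matrix.mul_smul, smul_smul, smul_zero,
    Matrix.zero_mul, Matrix.mul_zero, add_zero, zero_add, Matrix.mul_one, pow_two, add_assoc]
  have hs : g * √(1 - ζ) * (g * √(1 - ζ)) = g * g * (1 - ζ) := by
    rw [mul_mul_mul_comm, Real.mul_self_sqrt (by linarith)]
  rw [hs]

theorem isP2ADHM_deform_rotate {ζ : ℝ} (hζ : ζ ≤ 1) {p : ConfP2 k r} (hp : IsP2ADHM ζ p)
    {f g : ℝ} (hfg : f ^ 2 + g ^ 2 = 1) : IsP2ADHM ζ (deform ζ p f g 1) := by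
  rw [isP2ADHM_deform_iff hζ, one_smul, mul_one]
  exact (isP2ADHM_iff.1 hp).rotate hfg

theorem isP2ADHM_deform_shrink {ζ : ℝ} (hζ : ζ ≤ 1) (p : ConfP2 k r) (u : ℝ) :
    IsP2ADHM ζ (deform ζ p 0 1 u) := by
  rw [isP2ADHM_deform_iff hζ]
  simpa using isADHMGram_shrink ζ u p.2.2.1

theorem p2NonDeg_deform {ζ : ℝ} (hζ : ζ < 1) (p : ConfP2 k r) (f : ℝ) {g : ℝ} (hg : g ≠ 0)
    (u : ℝ) : P2NonDeg (deform ζ p f g u) := by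
  have hs : √(1 - ζ) ≠ 0 := (Real.sqrt_pos.2 (by linarith)).ne'
  refine p2NonDeg_of_mul_eq_one
    (R := (fromRows 0 (fromRows 0 (fromRows 0 (g⁻¹ • 1)))).submatrix (framingEquiv k r).symm id)
    (L := (fromCols 0 (fromCols 0 (fromCols ((g * √(1 - ζ))⁻¹ • 1) 0))).submatrix id
      (framingEquiv k r).symm) ?_ ?_ <;>
  simp [deform, fromCols_mul_fromRows, smul_smul, mul_assoc, hg, hs]

theorem deform_one_zero_one (ζ : ℝ) (p : ConfP2 k r) : deform ζ p 1 0 1 = extP2 (3 * k) p := by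
  simp only [deform, extP2, one_smul, zero_smul, zero_mul, fromCols_zero, fromRows_zero,
    Prod.mk.injEq, true_and]
  constructor <;> ext i j
  · refine Fin.addCases (fun l => ?_) (fun l => ?_) j <;> simp [framingEquiv, extendCols]
  · refine Fin.addCases (fun l => ?_) (fun l => ?_) i <;> simp [framingEquiv, extendRows]

theorem deform_zero_one_zero (ζ : ℝ) (p q : ConfP2 k r) :
    deform ζ p 0 1 0 = deform ζ q 0 1 0 := by
  simp [deform]

@[fun_prop]
theorem continuous_deform {X : Type*} [TopologicalSpace X] (ζ : ℝ) {p : X → ConfP2 k r}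
    {f g u : X → ℝ} (hp : Continuous p) (hf : Continuous f) (hg : Continuous g)
    (hu : Continuous u) : Continuous fun x => deform ζ (p x) (f x) (g x) (u x) := by
  unfold deform
  fun_prop

abbrev NonDegData (ζ : ℝ) (k r : ℕ) := {p : ConfP2 k r // IsP2ADHM ζ p ∧ P2NonDeg p}

section Homotopy

open Real unitInterval

variable {ζ : ℝ}

noncomputable def stabilization (ζ : ℝ) (k r : ℕ) :
    C(NonDegData ζ k r, NonDegData ζ k (r + 3 * k)) where
  toFun p := ⟨extP2 (3 * k) p, isP2ADHM_extP2 _ p.2.1, p2NonDeg_extP2 _ p.2.2⟩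
  continuous_toFun :=
    ((continuous_deform ζ continuous_subtype_val continuous_const continuous_const
      continuous_const).congr fun p => deform_one_zero_one ζ p.1).subtype_mk _

noncomputable def shrinkPoint (hζ : ζ < 1) (p : ConfP2 k r) (u : ℝ) :
    NonDegData ζ k (r + 3 * k) :=
  ⟨deform ζ p 0 1 u, isP2ADHM_deform_shrink hζ.le p u, p2NonDeg_deform hζ p 0 one_ne_zero u⟩

@[fun_prop]
theorem continuous_shrinkPoint {X : Type*} [TopologicalSpace X] (hζ : ζ < 1)
    {p : X → ConfP2 k r} {u : X → ℝ} (hp : Continuous p) (hu : Continuous u) :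
    Continuous fun x => shrinkPoint hζ (p x) (u x) :=
  (continuous_deform ζ hp continuous_const continuous_const hu).subtype_mk _

noncomputable def shrink (hζ : ζ < 1) (u : ℝ) :
    C(NonDegData ζ k r, NonDegData ζ k (r + 3 * k)) where
  toFun p := shrinkPoint hζ p u
  continuous_toFun := by fun_prop

theorem p2NonDeg_deform_rotate (hζ : ζ < 1) {p : ConfP2 k r} (hp : P2NonDeg p) (t : I) :
    P2NonDeg (deform ζ p (cos (π / 2 * t)) (sin (π / 2 * t)) 1) := by
  rcases eq_or_ne t 0 with rfl | ht
  · simpa [deform_one_zero_one] using p2NonDeg_extP2 (3 * k) hp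
  · refine p2NonDeg_deform hζ _ _ (sin_pos_of_pos_of_lt_pi ?_ ?_).ne' _
    · exact mul_pos (by positivity) (unitInterval.pos_iff_ne_zero.2 ht)
    · nlinarith [pi_pos, t.2.2]

noncomputable def rotateHomotopy (hζ : ζ < 1) :
    ContinuousMap.Homotopy (stabilization ζ k r) (shrink hζ 1) where
  toFun x := ⟨deform ζ x.2 (cos (π / 2 * x.1)) (sin (π / 2 * x.1)) 1,
    isP2ADHM_deform_rotate hζ.le x.2.2.1 (cos_sq_add_sin_sq _),
    p2NonDeg_deform_rotate hζ x.2.2.2 x.1⟩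
  continuous_toFun := by fun_prop
  map_zero_left p := by simp [stabilization, deform_one_zero_one]
  map_one_left p := by simp [shrink, shrinkPoint]

noncomputable def shrinkHomotopy (hζ : ζ < 1) :
    ContinuousMap.Homotopy (shrink (k := k) (r := r) hζ 1)
      (ContinuousMap.const _ (shrinkPoint hζ 0 0)) where
  toFun x := shrinkPoint hζ x.2 (1 - x.1)
  continuous_toFun := by fun_prop
  map_zero_left p := by simp [shrink, shrinkPoint]
  map_one_left p := Subtype.ext (by simpa [shrinkPoint] using deform_zero_one_zero ζ p.1 0)

end Homotopy

end P2ADHM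

open P2ADHM

/-- For `|ζ| < 1`, the inclusion `E_k^r(ζ) → E_k^{r+3k}(ζ)`,
`(a₁,a₂,d,b,c) ↦ (a₁,a₂,d,(b 0 0 0),(c;0;0;0))`, of the spaces of P²-ADHM data
at level `ζ` satisfying the non-degeneracy conditions C1' and C2' is a
well-defined continuous map and is null-homotopic. -/
theorem stmt16 (k r : ℕ) (ζ : ℝ) (hζ : |ζ| < 1) :
    ∃ f : C({p : ConfP2 k r // IsP2ADHM ζ p ∧ P2NonDeg p},
            {p : ConfP2 k (r + 3 * k) // IsP2ADHM ζ p ∧ P2NonDeg p}),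
      (∀ p, (f p : ConfP2 k (r + 3 * k)) = extP2 (3 * k) (p : ConfP2 k r)) ∧
      ∃ q, f.Homotopic (ContinuousMap.const _ q) := by
  have hζ₁ : ζ < 1 := (abs_lt.1 hζ).2
  exact ⟨stabilization ζ k r, fun _ => rfl, shrinkPoint hζ₁ 0 0,
    ⟨(rotateHomotopy hζ₁).trans (shrinkHomotopy hζ₁)⟩⟩
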